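/- arXiv:1609.00952 — 6 statements merged into one kernel-verified Lean document; each statement's English description precedes it below -/
import Mathlib

section
/- Let d1 ≤ d2 ≤ d3 be positive integers and let (h_i) be the Hilbert function of a complete intersection of type (d1,d2,d3) in k[x,y,z], i.e., h_i = dim_k [k[x,y,z]/(f1,f2,f3)]_i for a regular sequence of forms of degrees d1,d2,d3 (equivalently h_i is determined by the generating function ∏_{j=1}^{3}(1+t+...+t^{d_j-1})). If the socle degree e = d1+d2+d3-3 is odd and d3 < d1+d2, then h_{(e-1)/2} = h_{(e+1)/2} = d1·d2 - (d1+d2-d3)^2/4. -/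
/-!
The coefficient `h n` counts the points `(a, b, c)` of the box `[0, d₁) × [0, d₂) × [0, d₃)` with
`a + b + c = n`, so `h n = N n - N (n - d₃)`, where `N K = boxCountLE d₁ d₂ K` counts the points
`(a, b)` of `[0, d₁) × [0, d₂)` with `a + b ≤ K`. The involution `(a, b) ↦ (d₁ - 1 - a, d₂ - 1 - b)`
gives `N K + N (d₁ + d₂ - 3 - K) = d₁ d₂`, hence `h n = d₁ d₂ - N (d₁ + d₂ - 3 - n) - N (n - d₃)`.
Writing `d₁ + d₂ - d₃ = 2t`, at both middle degrees the two arguments of `N` are `t - 1` and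
`t - 2`; these are smaller than `d₁` and `d₂`, where `N` is a triangular number, and
`N (t - 1) + N (t - 2) = t²`.
-/

/-- The Hilbert function of an artinian complete intersection whose generator
degrees are given by the list `ds`: the coefficients of
`∏_j (1 + t + ⋯ + t^(d_j - 1))`, extended by `0` to negative indices. -/
noncomputable def hilbCI (ds : List ℕ) (i : ℤ) : ℤ :=
  if i < 0 then 0
  else ((ds.map fun d => ∑ j ∈ Finset.range d, (Polynomial.X : Polynomial ℤ) ^ j)).prod.coeff
    i.toNat

open Finset Polynomial

def boxCountLE (d₁ d₂ : ℕ) (K : ℤ) : ℕ := #{p ∈ range d₁ ×ˢ range d₂ | (p.1 + p.2 : ℤ) ≤ K}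

theorem coeff_geomSum_mul_geomSum_mul_geomSum {R : Type*} [Semiring R] (d₁ d₂ d₃ k : ℕ) :
    ((∑ i ∈ range d₁, (X : R[X]) ^ i) * (∑ i ∈ range d₂, X ^ i) * ∑ i ∈ range d₃, X ^ i).coeff k
      = (#{x ∈ (range d₁ ×ˢ range d₂) ×ˢ range d₃ | x.1.1 + x.1.2 + x.2 = k} : R) := by
  rw [sum_mul_sum]
  simp only [sum_mul, mul_sum, ← pow_add, finsetSum_coeff, coeff_X_pow, natCast_card_filter,
    sum_product, eq_comm (a := k)]
  rw [sum_comm]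
  exact sum_congr rfl fun _ _ => sum_comm

theorem card_filter_range_add_eq (d s k : ℕ) :
    (#{c ∈ range d | s + c = k} : ℤ)
      = (if (s : ℤ) ≤ k then 1 else 0) - if (s : ℤ) ≤ k - d then 1 else 0 := by
  by_cases h : s ≤ k ∧ k < s + d
  · rw [card_eq_one.2 ⟨k - s, ?_⟩, if_pos (by omega), if_neg (by omega)]
    · rfl
    · ext c; simp only [mem_filter, mem_range, mem_singleton]; omega
  · rw [card_eq_zero.2 (filter_eq_empty_iff.2 fun c hc => ?_)]
    · split_ifs <;> omega
    · simp only [mem_range] at hc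
      omega

theorem boxCountLE_of_neg {d₁ d₂ : ℕ} {K : ℤ} (hK : K < 0) : boxCountLE d₁ d₂ K = 0 := by
  rw [boxCountLE, card_eq_zero, filter_eq_empty_iff]
  intro p _
  omega

theorem hilbCI_three_eq_sub (d₁ d₂ d₃ : ℕ) (n : ℤ) :
    hilbCI [d₁, d₂, d₃] n = boxCountLE d₁ d₂ n - boxCountLE d₁ d₂ (n - d₃) := by
  rcases lt_or_ge n 0 with hn | hn
  · rw [hilbCI, if_pos hn, boxCountLE_of_neg hn, boxCountLE_of_neg (by omega)]
    simp
  lift n to ℕ using hn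
  rw [hilbCI, if_neg (by omega), Int.toNat_natCast]
  simp only [List.map_cons, List.map_nil, List.prod_cons, List.prod_nil, mul_one, ← mul_assoc]
  rw [coeff_geomSum_mul_geomSum_mul_geomSum, natCast_card_filter, sum_product]
  simp only [← natCast_card_filter, card_filter_range_add_eq, sum_sub_distrib, boxCountLE]
  push_cast
  rfl

theorem boxCountLE_add_boxCountLE_reflect (d₁ d₂ : ℕ) (K : ℤ) :
    boxCountLE d₁ d₂ K + boxCountLE d₁ d₂ (d₁ + d₂ - 3 - K) = d₁ * d₂ := by
  have hreflect : boxCountLE d₁ d₂ (d₁ + d₂ - 3 - K)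
      = #{p ∈ range d₁ ×ˢ range d₂ | ¬ (p.1 + p.2 : ℤ) ≤ K} := by
    let σ : ℕ × ℕ → ℕ × ℕ := fun p => (d₁ - 1 - p.1, d₂ - 1 - p.2)
    refine card_nbij' σ σ ?_ ?_ ?_ ?_ <;> intro p hp <;>
      simp only [σ, coe_filter, Set.mem_ofPred_eq, mem_product, mem_range, Prod.ext_iff] at hp ⊢ <;>
      omega
  rw [hreflect, boxCountLE, card_filter_add_card_filter_not, card_product, card_range, card_range]

theorem boxCountLE_eq_add {d₁ d₂ : ℕ} {K : ℤ} (h₀ : 0 ≤ K) (h₁ : K < d₁) (h₂ : K < d₂) :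
    (boxCountLE d₁ d₂ K : ℤ) = boxCountLE d₁ d₂ (K - 1) + (K + 1) := by
  lift K to ℕ using h₀
  have hdiag : {p ∈ {p ∈ range d₁ ×ˢ range d₂ | (p.1 + p.2 : ℤ) ≤ K} |
      ¬ (p.1 + p.2 : ℤ) ≤ K - 1} = antidiagonal K := by
    ext p
    simp only [mem_filter, mem_product, mem_range, HasAntidiagonal.mem_antidiagonal]
    omega
  have hlower : {p ∈ {p ∈ range d₁ ×ˢ range d₂ | (p.1 + p.2 : ℤ) ≤ K} |
      (p.1 + p.2 : ℤ) ≤ K - 1} = {p ∈ range d₁ ×ˢ range d₂ | (p.1 + p.2 : ℤ) ≤ K - 1} := by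
    rw [filter_filter]
    exact filter_congr fun p _ => by omega
  rw [boxCountLE, ← card_filter_add_card_filter_not (fun p : ℕ × ℕ => (p.1 + p.2 : ℤ) ≤ K - 1),
    hdiag, hlower, Nat.card_antidiagonal, boxCountLE]
  push_cast
  rfl

theorem two_mul_boxCountLE {d₁ d₂ : ℕ} {K : ℤ} (h₀ : -1 ≤ K) (h₁ : K < d₁) (h₂ : K < d₂) :
    2 * (boxCountLE d₁ d₂ K : ℤ) = (K + 1) * (K + 2) := by
  induction K, h₀ using Int.leInduction with
  | base => simp [boxCountLE_of_neg]
  | succ K hK ih =>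
    rw [boxCountLE_eq_add (by omega) h₁ h₂, add_sub_cancel_right, mul_add,
      ih (by omega) (by omega)]
    ring

theorem hilbCI_three_eq_mul_sub_sub (d₁ d₂ d₃ : ℕ) (n : ℤ) :
    hilbCI [d₁, d₂, d₃] n
      = d₁ * d₂ - boxCountLE d₁ d₂ (d₁ + d₂ - 3 - n) - boxCountLE d₁ d₂ (n - d₃) := by
  have := boxCountLE_add_boxCountLE_reflect d₁ d₂ n
  rw [hilbCI_three_eq_sub]
  omega

theorem ci_codim3_odd_middle_general (d1 d2 d3 : ℕ) (h12 : d1 ≤ d2) (h23 : d2 ≤ d3)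
    (e : ℤ) (he : e = d1 + d2 + d3 - 3) (hodd : Odd e) (hlt : (d3 : ℤ) < d1 + d2) :
    hilbCI [d1, d2, d3] ((e - 1) / 2) = hilbCI [d1, d2, d3] ((e + 1) / 2) ∧
    4 * hilbCI [d1, d2, d3] ((e - 1) / 2) =
      4 * d1 * d2 - ((d1 : ℤ) + d2 - d3) ^ 2 := by
  obtain ⟨k, hk⟩ := hodd
  obtain ⟨t, ht⟩ : ∃ t : ℤ, (d1 : ℤ) + d2 - d3 = 2 * t := ⟨k + 2 - d3, by omega⟩
  have hlow : hilbCI [d1, d2, d3] ((e - 1) / 2)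
      = d1 * d2 - boxCountLE d1 d2 (t - 1) - boxCountLE d1 d2 (t - 2) := by
    rw [hilbCI_three_eq_mul_sub_sub, show (d1 + d2 - 3 - (e - 1) / 2 : ℤ) = t - 1 by omega,
      show (e - 1) / 2 - d3 = t - 2 by omega]
  have hhigh : hilbCI [d1, d2, d3] ((e + 1) / 2)
      = d1 * d2 - boxCountLE d1 d2 (t - 2) - boxCountLE d1 d2 (t - 1) := by
    rw [hilbCI_three_eq_mul_sub_sub, show (d1 + d2 - 3 - (e + 1) / 2 : ℤ) = t - 2 by omega,
      show (e + 1) / 2 - d3 = t - 1 by omega]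
  have htri₁ : 2 * (boxCountLE d1 d2 (t - 1) : ℤ) = (t - 1 + 1) * (t - 1 + 2) :=
    two_mul_boxCountLE (by omega) (by omega) (by omega)
  have htri₂ : 2 * (boxCountLE d1 d2 (t - 2) : ℤ) = (t - 2 + 1) * (t - 2 + 2) :=
    two_mul_boxCountLE (by omega) (by omega) (by omega)
  refine ⟨by rw [hlow, hhigh]; ring, ?_⟩
  rw [hlow, ht]
  linear_combination (-2) * htri₁ - 2 * htri₂

theorem ci_codim3_odd_middle (d1 d2 d3 : ℕ) (hd1 : 0 < d1) (h12 : d1 ≤ d2) (h23 : d2 ≤ d3)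
    (e : ℤ) (he : e = d1 + d2 + d3 - 3) (hodd : Odd e) (hlt : (d3 : ℤ) < d1 + d2) :
    hilbCI [d1, d2, d3] ((e - 1) / 2) = hilbCI [d1, d2, d3] ((e + 1) / 2) ∧
    4 * hilbCI [d1, d2, d3] ((e - 1) / 2) =
      4 * d1 * d2 - ((d1 : ℤ) + d2 - d3) ^ 2 :=
  ci_codim3_odd_middle_general d1 d2 d3 h12 h23 e he hodd hlt
end

section
/- Let d1 ≤ d2 ≤ d3 be positive integers, let e = d1+d2+d3-3 be even, and let (h_i) be the Hilbert function of an artinian complete intersection of type (d1,d2,d3) in three variables. Then h_{e/2} - h_{e/2 - 1} = 0 if d3 ≥ d1+d2+1, and h_{e/2} - h_{e/2 - 1} = 1 if d3 ≤ d1+d2-1. -/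
/-! Multiplying the generating polynomial by `1 - t` shows that the first difference of the
Hilbert function of type `(d, ds)` is `h_ds(i) - h_ds(i - d)`. In codimension two this gives the
closed form `h_{(a,b)}(i) = max 0 (min (i + 1, a + b - 1 - i, a, b))`, so in codimension three
`h_{e/2} - h_{e/2-1} = h_{(d2,d3)}(e/2) - h_{(d2,d3)}(e/2 - d1)` is a comparison of two values
of a piecewise linear function, which linear arithmetic settles. -/

open Polynomial Finset

noncomputable def ciHilbertPoly (ds : List ℕ) : ℤ[X] :=
  (ds.map fun d => ∑ j ∈ range d, (X : ℤ[X]) ^ j).prod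

lemma ciHilbertPoly_cons (d : ℕ) (ds : List ℕ) :
    ciHilbertPoly (d :: ds) = (∑ j ∈ range d, (X : ℤ[X]) ^ j) * ciHilbertPoly ds := by
  simp [ciHilbertPoly]

lemma hilbCI_of_neg (ds : List ℕ) {i : ℤ} (hi : i < 0) : hilbCI ds i = 0 :=
  if_pos hi

lemma hilbCI_natCast_sub (ds : List ℕ) (n k : ℕ) :
    hilbCI ds (n - k) = (ciHilbertPoly ds * X ^ k).coeff n := by
  rw [coeff_mul_X_pow', hilbCI]
  split_ifs
  · omega
  · rfl
  · congr 1
    omega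
  · omega

lemma hilbCI_natCast (ds : List ℕ) (n : ℕ) : hilbCI ds n = (ciHilbertPoly ds).coeff n := by
  simpa using hilbCI_natCast_sub ds n 0

lemma ciHilbertPoly_cons_mul_one_sub_X (d : ℕ) (ds : List ℕ) :
    ciHilbertPoly (d :: ds) * (1 - X) = ciHilbertPoly ds * (1 - X ^ d) := by
  rw [ciHilbertPoly_cons]
  linear_combination (-ciHilbertPoly ds) * geom_sum_mul (X : ℤ[X]) d

theorem hilbCI_cons_sub (d : ℕ) (ds : List ℕ) (i : ℤ) :
    hilbCI (d :: ds) i - hilbCI (d :: ds) (i - 1) = hilbCI ds i - hilbCI ds (i - d) := by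
  rcases lt_or_ge i 0 with hi | hi
  · simp only [hilbCI_of_neg _ hi, hilbCI_of_neg _ (by omega : i - 1 < 0),
      hilbCI_of_neg _ (by omega : i - d < 0), sub_zero]
  lift i to ℕ using hi
  have hcoeff := congrArg (coeff · i) (ciHilbertPoly_cons_mul_one_sub_X d ds)
  simp only [mul_sub, mul_one, coeff_sub] at hcoeff
  have hprev : hilbCI (d :: ds) (i - 1) = (ciHilbertPoly (d :: ds) * X).coeff i := by
    simpa using hilbCI_natCast_sub (d :: ds) i 1
  rw [hilbCI_natCast, hilbCI_natCast, hilbCI_natCast_sub, hprev, hcoeff]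

lemma hilbCI_singleton (b : ℕ) (i : ℤ) : hilbCI [b] i = if 0 ≤ i ∧ i < b then 1 else 0 := by
  rcases lt_or_ge i 0 with hi | hi
  · simp [hilbCI_of_neg _ hi, hi]
  lift i to ℕ using hi
  simp [hilbCI_natCast, ciHilbertPoly, coeff_X_pow]

theorem hilbCI_pair (a b : ℕ) (i : ℤ) :
    hilbCI [a, b] i = max 0 (min (min (i + 1) (a + b - 1 - i)) (min a b)) := by
  rcases lt_or_ge i (-1) with hi | hi
  · rw [hilbCI_of_neg _ (by omega)]
    omega
  induction i, hi using Int.leInduction with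
  | base => rw [hilbCI_of_neg _ (by omega)]; omega
  | succ i _ ih =>
    have step := hilbCI_cons_sub a [b] (i + 1)
    rw [add_sub_cancel_right, hilbCI_singleton, hilbCI_singleton] at step
    split_ifs at step <;> omega

theorem ci_codim3_even_middle_difference_general (d1 d2 d3 : ℕ) (h12 : d1 ≤ d2)
    (h23 : d2 ≤ d3) (e : ℤ) (he : e = d1 + d2 + d3 - 3) (heven : Even e) :
    ((d1 : ℤ) + d2 + 1 ≤ d3 →
      hilbCI [d1, d2, d3] (e / 2) - hilbCI [d1, d2, d3] (e / 2 - 1) = 0) ∧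
    ((d3 : ℤ) ≤ d1 + d2 - 1 →
      hilbCI [d1, d2, d3] (e / 2) - hilbCI [d1, d2, d3] (e / 2 - 1) = 1) := by
  rw [hilbCI_cons_sub, hilbCI_pair, hilbCI_pair]
  obtain ⟨r, rfl⟩ := heven
  constructor <;> intro <;> omega

theorem ci_codim3_even_middle_difference (d1 d2 d3 : ℕ) (hd1 : 0 < d1) (h12 : d1 ≤ d2)
    (h23 : d2 ≤ d3) (e : ℤ) (he : e = d1 + d2 + d3 - 3) (heven : Even e) :
    ((d1 : ℤ) + d2 + 1 ≤ d3 →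
      hilbCI [d1, d2, d3] (e / 2) - hilbCI [d1, d2, d3] (e / 2 - 1) = 0) ∧
    ((d3 : ℤ) ≤ d1 + d2 - 1 →
      hilbCI [d1, d2, d3] (e / 2) - hilbCI [d1, d2, d3] (e / 2 - 1) = 1) :=
  ci_codim3_even_middle_difference_general d1 d2 d3 h12 h23 e he heven
end

section
/- Let n be odd and d be even, and let (h_i) be the Hilbert function of an artinian complete intersection of type (d,d,...,d) (n copies) in n variables. Then n divides h_{(n(d-1)-1)/2}, and h_{(n(d-1)-1)/2} = h_{(n(d-1)+1)/2}. -/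
open Polynomial

namespace Polynomial

section Semiring

variable {R : Type*} [Semiring R]

theorem reflect_pow_eq_self {p : R[X]} {N : ℕ} (hdeg : p.natDegree ≤ N) (hp : reflect N p = p)
    (k : ℕ) : reflect (k * N) (p ^ k) = p ^ k := by
  induction k with
  | zero => simp [reflect_one]
  | succ k ih =>
    have hdeg_pow : (p ^ k).natDegree ≤ k * N :=
      natDegree_pow_le.trans (Nat.mul_le_mul_left k hdeg)
    rw [pow_succ, add_one_mul, reflect_mul _ _ hdeg_pow hdeg, ih, hp]

theorem coeff_sub_eq_of_reflect_eq_self {p : R[X]} {N : ℕ} (hp : reflect N p = p) {i : ℕ}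
    (hi : i ≤ N) : p.coeff (N - i) = p.coeff i := by
  conv_rhs => rw [← hp, coeff_reflect, revAt_le hi]

theorem coeff_geomSum (d j : ℕ) :
    (∑ i ∈ Finset.range d, (X : R[X]) ^ i).coeff j = if j < d then 1 else 0 := by
  simp [coeff_X_pow, Finset.sum_ite_eq]

theorem natDegree_geomSum_le (d : ℕ) :
    (∑ i ∈ Finset.range d, (X : R[X]) ^ i).natDegree ≤ d - 1 := by
  refine natDegree_le_iff_coeff_eq_zero.2 fun j hj => ?_
  rw [coeff_geomSum, if_neg (by omega)]

theorem reflect_geomSum (d : ℕ) :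
    reflect (d - 1) (∑ i ∈ Finset.range d, (X : R[X]) ^ i) =
      ∑ i ∈ Finset.range d, X ^ i := by
  ext j
  rw [coeff_reflect]
  rcases le_or_gt j (d - 1) with hj | hj
  · have hiff : d - 1 - j < d ↔ j < d := by omega
    rw [revAt_le hj, coeff_geomSum, coeff_geomSum, if_congr hiff rfl rfl]
  · rw [revAt_eq_self_of_lt hj]

end Semiring

theorem natCast_dvd_mul_coeff_pow {R : Type*} [CommSemiring R] (p : R[X]) (n k : ℕ) :
    (n : R) ∣ k * (p ^ n).coeff k := by
  cases k with
  | zero => simp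
  | succ k =>
    refine ⟨(p ^ (n - 1) * derivative p).coeff k, ?_⟩
    rw [mul_comm, Nat.cast_succ, ← coeff_derivative, derivative_pow, mul_assoc, coeff_C_mul]

theorem dvd_coeff_of_coeff_succ_eq {R : Type*} [CommRing R] {p : R[X]} {a : R}
    (hdvd : ∀ k : ℕ, a ∣ k * p.coeff k) {m : ℕ} (hm : p.coeff (m + 1) = p.coeff m) :
    a ∣ p.coeff m := by
  have h := dvd_sub (hdvd (m + 1)) (hdvd m)
  rwa [hm, Nat.cast_succ, add_one_mul, add_sub_cancel_left] at h

end Polynomial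

theorem hilbCI_replicate (n d i : ℕ) :
    hilbCI (List.replicate n d) i = ((∑ j ∈ Finset.range d, (X : ℤ[X]) ^ j) ^ n).coeff i := by
  simp [hilbCI, List.map_replicate, List.prod_replicate]

theorem ci_equigenerated_middle_divisible (n d : ℕ) (hn : Odd n) (hd : Even d) (hd0 : 0 < d) :
    (n : ℤ) ∣ hilbCI (List.replicate n d) (((n : ℤ) * (d - 1) - 1) / 2) ∧
    hilbCI (List.replicate n d) (((n : ℤ) * (d - 1) - 1) / 2) =
      hilbCI (List.replicate n d) (((n : ℤ) * (d - 1) + 1) / 2) := by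
  set g : ℤ[X] := ∑ j ∈ Finset.range d, X ^ j
  obtain ⟨m, hm⟩ : Odd (n * (d - 1)) := hn.mul (Nat.Even.sub_odd hd0 hd odd_one)
  have hm_int : (n : ℤ) * (d - 1) = 2 * m + 1 := by
    have := congrArg (Nat.cast : ℕ → ℤ) hm
    push_cast [Nat.cast_sub hd0] at this
    exact this
  have hlow : ((2 * m + 1 : ℤ) - 1) / 2 = (m : ℕ) := by omega
  have hhigh : ((2 * m + 1 : ℤ) + 1) / 2 = (m + 1 : ℕ) := by omega
  rw [hm_int, hlow, hhigh, hilbCI_replicate, hilbCI_replicate]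
  have hmiddle : (g ^ n).coeff (m + 1) = (g ^ n).coeff m := by
    have hpal : reflect (n * (d - 1)) (g ^ n) = g ^ n :=
      reflect_pow_eq_self (natDegree_geomSum_le d) (reflect_geomSum d) n
    have hsym := coeff_sub_eq_of_reflect_eq_self hpal (i := m) (by omega)
    rwa [hm, show 2 * m + 1 - m = m + 1 by omega] at hsym
  exact ⟨dvd_coeff_of_coeff_succ_eq (natCast_dvd_mul_coeff_pow g n) hmiddle, hmiddle.symm⟩
end

section
/- Let (h_i) be the Hilbert function of the artinian complete intersection of type (d,d,d,d) in four variables. Then with e = 4d-4, we have h_{e/2} - h_{e/2-1} = d. -/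
open Polynomial PowerSeries

noncomputable def hilbSeriesCI (R : Type*) [CommRing R] (ds : List ℕ) : R[X] :=
  (ds.map fun d => ∑ j ∈ Finset.range d, (Polynomial.X : R[X]) ^ j).prod

section

variable {R : Type*} [CommRing R]

lemma one_sub_X_mul_coe_geom_sum (d : ℕ) :
    (1 - PowerSeries.X : R⟦X⟧) * ((∑ j ∈ Finset.range d, Polynomial.X ^ j : R[X]) : R⟦X⟧) =
      1 - PowerSeries.X ^ d := by
  simpa using congrArg (Polynomial.coeToPowerSeries.ringHom (R := R))
    (mul_neg_geom_sum (Polynomial.X : R[X]) d)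

lemma one_sub_X_pow_length_mul_hilbSeriesCI (ds : List ℕ) :
    (1 - PowerSeries.X : R⟦X⟧) ^ ds.length * (hilbSeriesCI R ds : R⟦X⟧) =
      (ds.map fun d => (1 - PowerSeries.X ^ d : R⟦X⟧)).prod := by
  induction ds with
  | nil => simp [hilbSeriesCI]
  | cons d ds ih =>
    rw [hilbSeriesCI] at ih ⊢
    simp only [List.map_cons, List.prod_cons, List.length_cons, Polynomial.coe_mul, ← ih,
      ← one_sub_X_mul_coe_geom_sum d]
    ring

lemma one_sub_X_mul_hilbSeriesCI_cons (d : ℕ) (ds : List ℕ) :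
    (1 - PowerSeries.X : R⟦X⟧) * (hilbSeriesCI R (d :: ds) : R⟦X⟧) =
      ((d :: ds).map fun d => (1 - PowerSeries.X ^ d : R⟦X⟧)).prod *
        (invOneSubPow R ds.length).val := by
  rw [← one_sub_X_pow_length_mul_hilbSeriesCI, List.length_cons, add_comm, mul_right_comm,
    one_sub_pow_add_mul_invOneSubPow_val_eq_one_sub_pow, pow_one]

lemma exists_one_sub_pow_eq (y : R) (k : ℕ) : ∃ q, (1 - y) ^ k = 1 - k * y + y ^ 2 * q := by
  induction k with
  | zero => exact ⟨0, by simp⟩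
  | succ k ih =>
    obtain ⟨q, hq⟩ := ih
    exact ⟨k + q - y * q, by rw [pow_succ, hq]; push_cast; ring⟩

lemma coeff_one_sub_X_pow_pow_mul_invOneSubPow {k d m n : ℕ} (hdn : d ≤ n) (hn : n < 2 * d) :
    coeff n ((1 - PowerSeries.X ^ d : R⟦X⟧) ^ k * (invOneSubPow R (m + 1)).val) =
      (m + n).choose m - k * (m + (n - d)).choose m := by
  obtain ⟨q, hq⟩ := exists_one_sub_pow_eq (PowerSeries.X ^ d : R⟦X⟧) k
  set B := (invOneSubPow R (m + 1)).val with hB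
  have hsplit : (1 - PowerSeries.X ^ d : R⟦X⟧) ^ k * B =
      B - PowerSeries.C (k : R) * (PowerSeries.X ^ d * B) + PowerSeries.X ^ (2 * d) * (q * B) := by
    rw [hq, map_natCast, pow_mul']
    ring
  rw [hsplit, hB, invOneSubPow_val_succ_eq_mk_add_choose]
  simp only [map_sub, map_add, PowerSeries.coeff_C_mul, PowerSeries.coeff_X_pow_mul', coeff_mk,
    if_pos hdn, if_neg hn.not_ge, add_zero]

end

lemma hilbCI_sub_hilbCI_sub_one (ds : List ℕ) (n : ℕ) :
    hilbCI ds n - hilbCI ds (n - 1) =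
      coeff n ((1 - PowerSeries.X : ℤ⟦X⟧) * (hilbSeriesCI ℤ ds : ℤ⟦X⟧)) := by
  rw [sub_mul, one_mul, map_sub]
  rcases n with _ | n
  · simp [hilbCI, hilbSeriesCI, Polynomial.coeff_coe]
  · simp only [hilbCI, hilbSeriesCI, Polynomial.coeff_coe, PowerSeries.coeff_succ_X_mul]
    rw [if_neg (by omega), if_neg (by omega), Nat.cast_succ, add_sub_cancel_right,
      Int.toNat_natCast, ← Nat.cast_succ, Int.toNat_natCast]

lemma choose_two_two_mul_sub_four_mul_choose_two (d : ℕ) :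
    ((2 * d).choose 2 : ℤ) - 4 * d.choose 2 = d := by
  have h : ((2 * d).choose 2 : ℚ) - 4 * d.choose 2 = d := by
    rw [Nat.cast_choose_two, Nat.cast_choose_two]
    push_cast
    ring
  exact_mod_cast h

theorem ci_dddd_middle_difference_general (d : ℕ) (e : ℤ) (he : e = 4 * (d : ℤ) - 4) :
    hilbCI [d, d, d, d] (e / 2) - hilbCI [d, d, d, d] (e / 2 - 1) = d := by
  subst he
  rcases d with _ | _ | m
  · simp [hilbCI]
  · norm_num [hilbCI]
  set d := m + 2
  have hmid : (4 * (d : ℤ) - 4) / 2 = ((2 * d - 2 : ℕ) : ℤ) := by omega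
  have hprod : ([d, d, d, d].map fun d => (1 - PowerSeries.X ^ d : ℤ⟦X⟧)).prod =
      (1 - PowerSeries.X ^ d) ^ 4 := by
    simp only [List.map_cons, List.map_nil, List.prod_cons, List.prod_nil]
    ring
  rw [hmid, hilbCI_sub_hilbCI_sub_one, one_sub_X_mul_hilbSeriesCI_cons, hprod,
    show [d, d, d].length = 2 + 1 from rfl,
    coeff_one_sub_X_pow_pow_mul_invOneSubPow (by omega) (by omega),
    show 2 + (2 * d - 2) = 2 * d by omega, show 2 + (2 * d - 2 - d) = d by omega]
  exact_mod_cast choose_two_two_mul_sub_four_mul_choose_two d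

theorem ci_dddd_middle_difference (d : ℕ) (hd0 : 0 < d) (e : ℤ) (he : e = 4 * (d : ℤ) - 4) :
    hilbCI [d, d, d, d] (e / 2) - hilbCI [d, d, d, d] (e / 2 - 1) = d :=
  ci_dddd_middle_difference_general d e he
end

section
/- Let k be a field of characteristic zero, R = k[x,y], and I an artinian homogeneous ideal. Fix a degree i, and suppose the forms of degree i in I have no common factor of positive degree (GCD is a unit). Then for every nonzero linear form ℓ, the multiplication map ×ℓ : [R/I]_{i-1} → [R/I]_i has maximal rank (is injective or surjective). -/
open MvPolynomial

/-- The degree `j` graded component of `R/I`, where `R = k[x_1,…,x_m]`: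
the image of the homogeneous polynomials of degree `j` in the quotient. -/
noncomputable def quotComponent {k : Type*} [Field k] {m : ℕ}
    (I : Ideal (MvPolynomial (Fin m) k)) (j : ℕ) :
    Submodule k (MvPolynomial (Fin m) k ⧸ I) :=
  Submodule.map (Ideal.Quotient.mkₐ k I).toLinearMap
    (MvPolynomial.homogeneousSubmodule (Fin m) k j)

/-- Multiplication by `u` from `[R/I]_j` to `[R/I]_{j+1}` has maximal rank:
it is injective or surjective. -/
def mulMaxRank {k : Type*} [Field k] {m : ℕ} (I : Ideal (MvPolynomial (Fin m) k))
    (u : MvPolynomial (Fin m) k ⧸ I) (j : ℕ) : Prop :=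
  (∀ x ∈ quotComponent I j, u * x = 0 → x = 0) ∨
  (∀ y ∈ quotComponent I (j + 1), ∃ x ∈ quotComponent I j, u * x = y)

/-!
Modulo a nonzero linear form `ℓ`, the ring `k[x,y]` becomes a polynomial ring in one linear
form `L`: if `e ≠ 0` is a zero of `ℓ`, every form `p` of degree `d` is congruent to `p(e) L^d`.
Hence the degree-`i` part of `k[x,y]/(ℓ)` is spanned by any form `g` of degree `i` with
`g(e) ≠ 0`, i.e. with `ℓ ∤ g`. Since the degree-`i` forms of `I` have no common factor, some
such `g` lies in `I`, so `R_i = k g + ℓ R_{i-1}` and multiplication by `ℓ` maps `[R/I]_{i-1}`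
onto `[R/I]_i`.
-/

namespace MvPolynomial

variable {σ R : Type*}

theorem IsHomogeneous.not_isUnit [CommSemiring R] [Nontrivial R]
    {p : MvPolynomial σ R} {n : ℕ} (hp : p.IsHomogeneous n) (hn : n ≠ 0) : ¬IsUnit p := by
  intro hu
  have := hu.map (constantCoeff (σ := σ) (R := R))
  rw [constantCoeff_eq, hp.coeff_eq_zero (by simpa using hn.symm)] at this
  exact not_isUnit_zero this

theorem IsHomogeneous.aeval_algebraMap_mul {A : Type*} [CommSemiring R] [CommSemiring A]
    [Algebra R A] {p : MvPolynomial σ R} {d : ℕ} (hp : p.IsHomogeneous d) (e : σ → R) (q : A) :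
    MvPolynomial.aeval (fun j => algebraMap R A (e j) * q) p =
      algebraMap R A (eval e p) * q ^ d := by
  conv_lhs => rw [p.as_sum]
  conv_rhs => rw [p.as_sum]
  rw [map_sum, map_sum, map_sum, Finset.sum_mul]
  refine Finset.sum_congr rfl fun m hm => ?_
  have hdeg : m.degree = d := by
    by_contra h
    exact mem_support_iff.mp hm (hp.coeff_eq_zero h)
  rw [aeval_monomial, eval_monomial, Finsupp.prod, Finsupp.prod]
  simp only [mul_pow, Finset.prod_mul_distrib, Finset.prod_pow_eq_pow_sum]
  rw [← Finsupp.degree_apply, hdeg, map_mul, map_prod]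
  simp only [map_pow]
  ring

theorem sub_aeval_mem_of_forall_X_sub_mem [CommRing R]
    {J : Ideal (MvPolynomial σ R)} {f : σ → MvPolynomial σ R} (hf : ∀ j, X j - f j ∈ J)
    (p : MvPolynomial σ R) : p - aeval f p ∈ J := by
  have hcomp : (Ideal.Quotient.mkₐ R J).comp (aeval f) = Ideal.Quotient.mkₐ R J := by
    ext j
    simpa [Ideal.Quotient.eq] using J.neg_mem (hf j)
  rw [← Ideal.Quotient.eq]
  exact (DFunLike.congr_fun hcomp p).symm

theorem homogeneousComponent_mul_of_isHomogeneous_left [CommSemiring R]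
    {p q : MvPolynomial σ R} {m : ℕ} (hp : p.IsHomogeneous m) (n : ℕ) :
    homogeneousComponent (m + n) (p * q) = p * homogeneousComponent n q := by
  let := gradedAlgebra (σ := σ) (R := R)
  have := DirectSum.coe_decompose_mul_of_left_mem_of_le (𝒜 := homogeneousSubmodule σ R)
    (b := q) (n := m + n) hp (Nat.le_add_right m n)
  simpa only [DirectSum.decompose, decomposition.decompose'_apply, Equiv.coe_fn_mk,
    Nat.add_sub_cancel_left] using this

end MvPolynomial

section TwoVariables

variable {k : Type*} [Field k] {ℓ : MvPolynomial (Fin 2) k}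

theorem exists_forall_X_sub_C_mul_mem_span_singleton
    (hℓ : ℓ ∈ homogeneousSubmodule (Fin 2) k 1) (hℓ0 : ℓ ≠ 0) :
    ∃ (e : Fin 2 → k) (L : MvPolynomial (Fin 2) k), ∀ j, X j - C (e j) * L ∈ Ideal.span {ℓ} := by
  rw [homogeneousSubmodule_one_eq_span_X, Submodule.mem_span_range_iff_exists_fun] at hℓ
  obtain ⟨c, rfl⟩ := hℓ
  have hc : c 0 ≠ 0 ∨ c 1 ≠ 0 := by
    by_contra! h
    exact hℓ0 (by simp [Fin.sum_univ_two, h.1, h.2])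
  -- `(c 1, -c 0)` is the zero of `ℓ`, and `L` completes `ℓ` to a basis of linear forms.
  obtain ⟨u, v, huv⟩ : ∃ u v, u * c 1 + v * c 0 = 1 := by
    rcases hc with h0 | h1
    · exact ⟨0, (c 0)⁻¹, by simp [h0]⟩
    · exact ⟨(c 1)⁻¹, 0, by simp [h1]⟩
  have huv' : C u * C (c 1) + C v * C (c 0) = (1 : MvPolynomial (Fin 2) k) := by
    rw [← map_mul, ← map_mul, ← map_add, huv, map_one]
  refine ⟨![c 1, -c 0], C u * X 0 - C v * X 1, Fin.forall_fin_two.mpr ⟨?_, ?_⟩⟩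
  all_goals
    rw [Ideal.mem_span_singleton]
    simp only [Fin.sum_univ_two, smul_eq_C_mul, Matrix.cons_val_zero, Matrix.cons_val_one,
      map_neg]
  · exact ⟨C v, by linear_combination (-X 0 : MvPolynomial (Fin 2) k) * huv'⟩
  · exact ⟨C u, by linear_combination (-X 1 : MvPolynomial (Fin 2) k) * huv'⟩

theorem exists_sub_C_eval_mul_pow_mem_span_singleton
    (hℓ : ℓ ∈ homogeneousSubmodule (Fin 2) k 1) (hℓ0 : ℓ ≠ 0) :
    ∃ (e : Fin 2 → k) (L : MvPolynomial (Fin 2) k), ∀ {d : ℕ} {p : MvPolynomial (Fin 2) k},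
      p.IsHomogeneous d → p - C (eval e p) * L ^ d ∈ Ideal.span {ℓ} := by
  obtain ⟨e, L, hL⟩ := exists_forall_X_sub_C_mul_mem_span_singleton hℓ hℓ0
  refine ⟨e, L, fun {d p} hp => ?_⟩
  have hsubst := hp.aeval_algebraMap_mul e L
  rw [algebraMap_eq] at hsubst
  rw [← hsubst]
  exact sub_aeval_mem_of_forall_X_sub_mem hL p

theorem exists_eq_C_mul_add_mul_of_not_dvd (hℓ : ℓ ∈ homogeneousSubmodule (Fin 2) k 1)
    (hℓ0 : ℓ ≠ 0) {g G : MvPolynomial (Fin 2) k} {j : ℕ} (hg : g.IsHomogeneous (j + 1))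
    (hℓg : ¬ℓ ∣ g) (hG : G.IsHomogeneous (j + 1)) :
    ∃ (t : k) (h : MvPolynomial (Fin 2) k), h.IsHomogeneous j ∧ G = C t * g + ℓ * h := by
  obtain ⟨e, L, hL⟩ := exists_sub_C_eval_mul_pow_mem_span_singleton hℓ hℓ0
  have hge : eval e g ≠ 0 := fun h0 =>
    hℓg (Ideal.mem_span_singleton.mp (by simpa [h0] using hL hg))
  set t := eval e G / eval e g
  have ht : (C t * C (eval e g) : MvPolynomial (Fin 2) k) = C (eval e G) := by
    rw [← map_mul, div_mul_cancel₀ _ hge]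
  have hmem : G - C t * g ∈ Ideal.span {ℓ} := by
    have : G - C t * g = (G - C (eval e G) * L ^ (j + 1)) -
        C t * (g - C (eval e g) * L ^ (j + 1)) := by
      linear_combination (-L ^ (j + 1)) * ht
    rw [this]
    exact sub_mem (hL hG) (Ideal.mul_mem_left _ _ (hL hg))
  obtain ⟨h, hh⟩ := Ideal.mem_span_singleton.mp hmem
  have hℓh : (ℓ * h).IsHomogeneous (1 + j) := by
    rw [← hh, add_comm]
    exact hG.sub (hg.C_mul t)
  refine ⟨t, homogeneousComponent j h, homogeneousComponent_isHomogeneous j h, ?_⟩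
  rw [← homogeneousComponent_mul_of_isHomogeneous_left hℓ, homogeneousComponent_of_mem hℓh,
    if_pos rfl, ← hh]
  ring

theorem exists_mk_mul_eq_of_not_dvd {I : Ideal (MvPolynomial (Fin 2) k)}
    (hℓ : ℓ ∈ homogeneousSubmodule (Fin 2) k 1) (hℓ0 : ℓ ≠ 0) {g : MvPolynomial (Fin 2) k}
    {j : ℕ} (hgI : g ∈ I) (hg : g.IsHomogeneous (j + 1)) (hℓg : ¬ℓ ∣ g) :
    ∀ y ∈ quotComponent I (j + 1), ∃ x ∈ quotComponent I j, Ideal.Quotient.mk I ℓ * x = y := by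
  rintro _ ⟨G, hG, rfl⟩
  obtain ⟨t, h, hh, rfl⟩ := exists_eq_C_mul_add_mul_of_not_dvd hℓ hℓ0 hg hℓg hG
  refine ⟨Ideal.Quotient.mk I h, ⟨h, hh, rfl⟩, ?_⟩
  simp [Ideal.Quotient.eq_zero_iff_mem.mpr hgI]

end TwoVariables

theorem codim_two_no_gcd_maxRank_general {k : Type*} [Field k]
    (I : Ideal (MvPolynomial (Fin 2) k))
    (i : ℕ) (hi : 0 < i)
    (hgcd : ∀ F : MvPolynomial (Fin 2) k,
      (∀ g ∈ I, MvPolynomial.IsHomogeneous g i → F ∣ g) → IsUnit F)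
    (ℓ : MvPolynomial (Fin 2) k) (hℓ : ℓ ∈ MvPolynomial.homogeneousSubmodule (Fin 2) k 1)
    (hℓ0 : ℓ ≠ 0) :
    mulMaxRank I (Ideal.Quotient.mk I ℓ) (i - 1) := by
  obtain ⟨g, hgI, hg, hℓg⟩ : ∃ g ∈ I, g.IsHomogeneous i ∧ ¬ℓ ∣ g := by
    by_contra! h
    exact IsHomogeneous.not_isUnit hℓ one_ne_zero (hgcd ℓ h)
  obtain ⟨j, rfl⟩ := Nat.exists_eq_add_one_of_ne_zero hi.ne'
  exact Or.inr (exists_mk_mul_eq_of_not_dvd hℓ hℓ0 hgI hg hℓg)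

theorem codim_two_no_gcd_maxRank {k : Type*} [Field k] [CharZero k]
    (I : Ideal (MvPolynomial (Fin 2) k))
    (hart : FiniteDimensional k (MvPolynomial (Fin 2) k ⧸ I))
    (i : ℕ) (hi : 0 < i)
    (hgcd : ∀ F : MvPolynomial (Fin 2) k,
      (∀ g ∈ I, MvPolynomial.IsHomogeneous g i → F ∣ g) → IsUnit F)
    (ℓ : MvPolynomial (Fin 2) k) (hℓ : ℓ ∈ MvPolynomial.homogeneousSubmodule (Fin 2) k 1)
    (hℓ0 : ℓ ≠ 0) :
    mulMaxRank I (Ideal.Quotient.mk I ℓ) (i - 1) :=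
  codim_two_no_gcd_maxRank_general I i hi hgcd ℓ hℓ hℓ0
end

section
/- Let A = R/I be a standard graded artinian Gorenstein k-algebra with socle degree e (i.e., [A]_e ≅ k and multiplication [A]_i × [A]_{e-i} → [A]_e is a perfect pairing for all i). Set i = ⌊(e-1)/2⌋. Then a linear form ℓ ∈ [A]_1 is a weak Lefschetz element of A if and only if the single multiplication map ×ℓ : [A]_i → [A]_{i+1} has maximal rank. -/
open MvPolynomial

/-- `ℓ` is a weak Lefschetz element of `R/I`: every multiplication map
`×ℓ : [R/I]_j → [R/I]_{j+1}` has maximal rank. -/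
def IsWeakLefschetzElem {k : Type*} [Field k] {m : ℕ}
    (I : Ideal (MvPolynomial (Fin m) k)) (ℓ : MvPolynomial (Fin m) k) : Prop :=
  ∀ j : ℕ, mulMaxRank I (Ideal.Quotient.mk I ℓ) j

/-!
Write `A_j` for the graded components of `A = R/I`. Multiplication into the one-dimensional
socle `A_e` is a perfect pairing `A_a × A_b → A_e` for `a + b = e`, and under it
`×ℓ : A_a → A_{a+1}` and `×ℓ : A_b → A_{b+1}` are transposes of each other when
`a + b + 1 = e`; so injectivity in degree `a` is equivalent to surjectivity in degree
`e - 1 - a`. Since `A` is generated in degree one, surjectivity of `×ℓ` propagates to all higher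
degrees. Maximal rank in degree `⌊(e-1)/2⌋` therefore yields surjectivity from degree
`⌈(e-1)/2⌉` on, and by duality injectivity in all lower degrees.
-/

namespace Submodule

variable {k A : Type*} [Field k] [CommRing A] [Algebra k A]

noncomputable def mulPairing {U W S : Submodule k A} (hUW : U * W ≤ S) :
    U →ₗ[k] W →ₗ[k] S :=
  ((LinearMap.mul k A).compl₁₂ U.subtype W.subtype).codRestrict₂ S.subtype
    S.injective_subtype fun x w => by
      rw [Submodule.range_subtype]; exact hUW (mul_mem_mul x.2 w.2)

@[simp]
theorem coe_mulPairing_apply {U W S : Submodule k A} (hUW : U * W ≤ S) (x : U) (w : W) :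
    (mulPairing hUW x w : A) = x * w :=
  LinearMap.codRestrict₂_apply _ S.subtype _ _ x w

/-- `x ↦ (y ↦ x y)` embeds `U` into `Hom(V, S)`, which has dimension `dim V`. -/
theorem finrank_le_of_forall_exists_mul_ne_zero {U V S : Submodule k A}
    [FiniteDimensional k V] [FiniteDimensional k S]
    (hUV : U * V ≤ S) (hS : Module.finrank k S = 1)
    (hnd : ∀ x ∈ U, x ≠ 0 → ∃ y ∈ V, x * y ≠ 0) :
    Module.finrank k U ≤ Module.finrank k V := by
  have hinj : Function.Injective (mulPairing hUV) := by
    refine (injective_iff_map_eq_zero _).2 fun x hx => by_contra fun hx0 => ?_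
    obtain ⟨y, hy, hxy⟩ := hnd x x.2 (by simpa using hx0)
    exact hxy (by simpa using congr((($hx ⟨y, hy⟩ : S) : A)))
  simpa [Module.finrank_linearMap, hS] using LinearMap.finrank_le_finrank_of_injective hinj

theorem exists_ne_zero_forall_mul_eq_zero_of_finrank_lt {U W S : Submodule k A}
    [FiniteDimensional k W] [FiniteDimensional k S]
    (hUW : U * W ≤ S) (hS : Module.finrank k S = 1)
    (hlt : Module.finrank k W < Module.finrank k U) :
    ∃ x ∈ U, x ≠ 0 ∧ ∀ w ∈ W, x * w = 0 := by
  by_contra! h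
  exact hlt.not_ge (finrank_le_of_forall_exists_mul_ne_zero hUW hS h)

end Submodule

section Graded

variable {k : Type*} [Field k] {m : ℕ} {I : Ideal (MvPolynomial (Fin m) k)}

instance (j : ℕ) : FiniteDimensional k (quotComponent I j) :=
  Module.Finite.iff_fg.mpr ((homogeneousSubmodule_fg (Fin m) k j).map _)

theorem quotComponent_add (a b : ℕ) :
    quotComponent I (a + b) = quotComponent I a * quotComponent I b := by
  simp only [quotComponent]
  rw [← Submodule.map_mul, ← homogeneousSubmodule_one_pow k (a + b), pow_add,
    homogeneousSubmodule_one_pow, homogeneousSubmodule_one_pow]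

theorem quotComponent_succ_le_span_mul_iff {u : MvPolynomial (Fin m) k ⧸ I} {j : ℕ} :
    quotComponent I (j + 1) ≤ Submodule.span k {u} * quotComponent I j ↔
      ∀ y ∈ quotComponent I (j + 1), ∃ x ∈ quotComponent I j, u * x = y := by
  simp only [SetLike.le_def, Submodule.mem_span_singleton_mul]

/-- Surjectivity of `×u` propagates upwards because `A_{j+2} = A_1 A_{j+1}`. -/
theorem quotComponent_succ_le_span_mul_of_le {u : MvPolynomial (Fin m) k ⧸ I} {t j : ℕ}
    (hsurj : quotComponent I (t + 1) ≤ Submodule.span k {u} * quotComponent I t)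
    (htj : t ≤ j) :
    quotComponent I (j + 1) ≤ Submodule.span k {u} * quotComponent I j := by
  induction j, htj using Nat.le_induction with
  | base => exact hsurj
  | succ j _ ih =>
    calc quotComponent I (j + 1 + 1)
        = quotComponent I 1 * quotComponent I (j + 1) := by rw [add_comm, quotComponent_add]
      _ ≤ quotComponent I 1 * (Submodule.span k {u} * quotComponent I j) := by gcongr
      _ = Submodule.span k {u} * quotComponent I (j + 1) := by
        rw [mul_left_comm (quotComponent I 1), ← quotComponent_add, add_comm]

end Graded

section Gorenstein

variable {k : Type*} [Field k] {m : ℕ} {I : Ideal (MvPolynomial (Fin m) k)} {e : ℕ}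

def MulPairingNondegenerate (I : Ideal (MvPolynomial (Fin m) k)) (e : ℕ) : Prop :=
  ∀ i ≤ e, ∀ x ∈ quotComponent I i, x ≠ 0 → ∃ y ∈ quotComponent I (e - i), x * y ≠ 0

theorem exists_mul_ne_zero_of_add_eq
    (hpair : MulPairingNondegenerate I e)
    {a b : ℕ} (hab : a + b = e) {x : MvPolynomial (Fin m) k ⧸ I}
    (hx : x ∈ quotComponent I a) (hx0 : x ≠ 0) :
    ∃ y ∈ quotComponent I b, x * y ≠ 0 := by
  subst hab
  simpa using hpair a (Nat.le_add_right a b) x hx hx0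

theorem finrank_quotComponent_eq_of_add_eq
    (hsoc : Module.finrank k (quotComponent I e) = 1)
    (hpair : MulPairingNondegenerate I e)
    {a b : ℕ} (hab : a + b = e) :
    Module.finrank k (quotComponent I a) = Module.finrank k (quotComponent I b) := by
  have hle : ∀ a b, a + b = e →
      Module.finrank k (quotComponent I a) ≤ Module.finrank k (quotComponent I b) :=
    fun a b hab => Submodule.finrank_le_of_forall_exists_mul_ne_zero
      (hab ▸ (quotComponent_add a b).ge) hsoc fun _ => exists_mul_ne_zero_of_add_eq hpair hab
  exact (hle a b hab).antisymm (hle b a (by omega))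

theorem eq_zero_of_mul_eq_zero_of_quotComponent_succ_le
    (hpair : MulPairingNondegenerate I e)
    {u : MvPolynomial (Fin m) k ⧸ I} {a b : ℕ} (hab : a + (b + 1) = e)
    (hsurj : quotComponent I (b + 1) ≤ Submodule.span k {u} * quotComponent I b) :
    ∀ x ∈ quotComponent I a, u * x = 0 → x = 0 := by
  intro x hx hux
  by_contra hx0
  obtain ⟨y, hy, hxy⟩ := exists_mul_ne_zero_of_add_eq hpair hab hx hx0
  obtain ⟨z, -, rfl⟩ := Submodule.mem_span_singleton_mul.1 (hsurj hy)
  exact hxy (by rw [mul_left_comm, ← mul_assoc, hux, zero_mul])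

/-- If the image `W` of `×u : A_b → A_{b+1}` were proper, then `dim W < dim A_{b+1} = dim A_a`
gives a nonzero `x ∈ A_a` with `x W = 0`; then `u x` annihilates `A_b`, so `u x = 0`. -/
theorem quotComponent_succ_le_span_mul_of_injective
    (hsoc : Module.finrank k (quotComponent I e) = 1)
    (hpair : MulPairingNondegenerate I e)
    {u : MvPolynomial (Fin m) k ⧸ I} (hu : u ∈ quotComponent I 1) {a b : ℕ}
    (hab : a + (b + 1) = e) (hinj : ∀ x ∈ quotComponent I a, u * x = 0 → x = 0) :
    quotComponent I (b + 1) ≤ Submodule.span k {u} * quotComponent I b := by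
  set W := Submodule.span k {u} * quotComponent I b
  have hWle : W ≤ quotComponent I (b + 1) := by
    rw [add_comm, quotComponent_add]
    exact mul_le_mul' ((Submodule.span_singleton_le_iff_mem _ _).2 hu) le_rfl
  have : FiniteDimensional k W := Submodule.finiteDimensional_of_le hWle
  have haW : quotComponent I a * W ≤ quotComponent I e := by
    rw [← hab, quotComponent_add]
    exact mul_le_mul' le_rfl hWle
  by_contra hnot
  have hlt : Module.finrank k W < Module.finrank k (quotComponent I a) := by
    rw [finrank_quotComponent_eq_of_add_eq hsoc hpair hab]
    exact Submodule.finrank_lt_finrank_of_lt (lt_of_le_not_ge hWle hnot)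
  obtain ⟨x, hx, hx0, hxW⟩ :=
    Submodule.exists_ne_zero_forall_mul_eq_zero_of_finrank_lt haW hsoc hlt
  refine hx0 (hinj x hx (by_contra fun hux => ?_))
  have hux_mem : u * x ∈ quotComponent I (a + 1) := by
    rw [add_comm, quotComponent_add]; exact Submodule.mul_mem_mul hu hx
  obtain ⟨y, hy, hxy⟩ := exists_mul_ne_zero_of_add_eq hpair (b := b) (by omega) hux_mem hux
  exact hxy (by rw [mul_comm u, mul_assoc]; exact hxW _ (Submodule.mul_mem_mul
    (Submodule.mem_span_singleton_self u) hy))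

theorem isWeakLefschetzElem_of_quotComponent_succ_le
    (hpair : MulPairingNondegenerate I e)
    {ℓ : MvPolynomial (Fin m) k} {t : ℕ} (ht : 2 * t ≤ e)
    (hsurj : quotComponent I (t + 1) ≤
      Submodule.span k {Ideal.Quotient.mk I ℓ} * quotComponent I t) :
    IsWeakLefschetzElem I ℓ := by
  intro j
  by_cases htj : t ≤ j
  · exact .inr (quotComponent_succ_le_span_mul_iff.1
      (quotComponent_succ_le_span_mul_of_le hsurj htj))
  · exact .inl (eq_zero_of_mul_eq_zero_of_quotComponent_succ_le hpair (b := e - 1 - j)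
      (by omega) (quotComponent_succ_le_span_mul_of_le hsurj (by omega)))

end Gorenstein

theorem gorenstein_wlp_single_degree_general {k : Type*} [Field k] {n : ℕ}
    (I : Ideal (MvPolynomial (Fin n) k))
    (e : ℕ)
    (hsoc : Module.finrank k (quotComponent I e) = 1)
    (htop : ∀ j : ℕ, e < j → quotComponent I j = ⊥)
    (hpair : ∀ i ≤ e, ∀ x ∈ quotComponent I i, x ≠ 0 →
      ∃ y ∈ quotComponent I (e - i), x * y ≠ 0)
    (ℓ : MvPolynomial (Fin n) k) (hℓ : ℓ ∈ MvPolynomial.homogeneousSubmodule (Fin n) k 1) :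
    IsWeakLefschetzElem I ℓ ↔ mulMaxRank I (Ideal.Quotient.mk I ℓ) ((e - 1) / 2) := by
  refine ⟨fun h => h _, fun h => ?_⟩
  refine isWeakLefschetzElem_of_quotComponent_succ_le hpair (t := e - 1 - (e - 1) / 2)
    (by omega) ?_
  rcases Nat.eq_zero_or_pos e with rfl | he
  · simp [htop 1 one_pos]
  rcases h with hinj | hsurj
  · exact quotComponent_succ_le_span_mul_of_injective hsoc hpair
      (Submodule.mem_map_of_mem hℓ) (by omega) hinj
  · exact quotComponent_succ_le_span_mul_of_le
      (quotComponent_succ_le_span_mul_iff.2 hsurj) (by omega)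

theorem gorenstein_wlp_single_degree {k : Type*} [Field k] [CharZero k] {n : ℕ}
    (I : Ideal (MvPolynomial (Fin n) k))
    (hIhom : ∀ f ∈ I, ∀ j : ℕ, MvPolynomial.homogeneousComponent j f ∈ I)
    (hart : FiniteDimensional k (MvPolynomial (Fin n) k ⧸ I))
    (e : ℕ)
    (hsoc : Module.finrank k (quotComponent I e) = 1)
    (htop : ∀ j : ℕ, e < j → quotComponent I j = ⊥)
    (hpair : ∀ i ≤ e, ∀ x ∈ quotComponent I i, x ≠ 0 →
      ∃ y ∈ quotComponent I (e - i), x * y ≠ 0)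
    (ℓ : MvPolynomial (Fin n) k) (hℓ : ℓ ∈ MvPolynomial.homogeneousSubmodule (Fin n) k 1) :
    IsWeakLefschetzElem I ℓ ↔ mulMaxRank I (Ideal.Quotient.mk I ℓ) ((e - 1) / 2) :=
  gorenstein_wlp_single_degree_general I e hsoc htop hpair ℓ hℓ
end
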